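/- Submodularity-based greedy bound on information gain: if g : Finset(X) → ℝ is monotone, submodular, and g(∅) = 0, and A_t is the set built greedily by adding at each step an element maximizing the marginal gain, then for any set B with |B| = t, g(B) ≤ (1 − 1/e)^{-1} · g(A_t). -/
import Mathlib


/-- Greedy guarantee for monotone submodular functions: if `g` is monotone,
submodular, with `g(∅) = 0`, and `A t` is the greedy set of size `t`, then for any
`B` with `|B| = t`, `g(B) ≤ (1 − 1/e)⁻¹ · g(A t)`. -/
theorem submodular_greedy_bound {X : Type*} [Fintype X] [DecidableEq X]
    (g : Finset X → ℝ)
    (hempty : g ∅ = 0)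
    (hmono : ∀ A B : Finset X, A ⊆ B → g A ≤ g B)
    (hsub : ∀ (A B : Finset X) (x : X), A ⊆ B → x ∉ B →
      g (insert x B) - g B ≤ g (insert x A) - g A)
    (A : ℕ → Finset X)
    (hA0 : A 0 = ∅)
    (hAgreedy : ∀ k : ℕ, ∃ xk : X, A (k + 1) = insert xk (A k) ∧
      ∀ y : X, g (insert y (A k)) - g (A k) ≤ g (insert xk (A k)) - g (A k))
    (t : ℕ) (B : Finset X) (hB : B.card = t) :
    g B ≤ (1 - 1 / Real.exp 1)⁻¹ * g (A t) := by
  classical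
  have hepos : (0:ℝ) < 1 - 1 / Real.exp 1 := by
    have h1 : (1:ℝ) < Real.exp 1 := by
      have := Real.add_one_le_exp 1; linarith
    have : 1 / Real.exp 1 < 1 := by
      rw [div_lt_one (by positivity)]; exact h1
    linarith
  -- key submodularity lemma
  have key : ∀ (S C : Finset X), g (C ∪ S) ≤ g C + ∑ x ∈ S, (g (insert x C) - g C) := by
    intro S
    induction S using Finset.induction_on with
    | empty => intro C; simp
    | @insert a S ha ih =>
        intro C
        rw [Finset.sum_insert ha]
        have hins : C ∪ insert a S = insert a (C ∪ S) := by
          ext y; simp [or_left_comm, or_comm, or_assoc]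
        by_cases hmem : a ∈ C ∪ S
        · have : insert a (C ∪ S) = C ∪ S := Finset.insert_eq_self.mpr hmem
          rw [hins, this]
          have h1 := ih C
          have h2 : (0:ℝ) ≤ g (insert a C) - g C := by
            have := hmono C (insert a C) (Finset.subset_insert a C); linarith
          linarith
        · have h1 : g (insert a (C ∪ S)) - g (C ∪ S) ≤ g (insert a C) - g C :=
            hsub C (C ∪ S) a Finset.subset_union_left hmem
          have h2 := ih C
          rw [hins]; linarith
  have hB0 : 0 ≤ g B := by
    have := hmono ∅ B (Finset.empty_subset B); linarith
  rcases Nat.eq_zero_or_pos t with ht0 | ht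
  · subst ht0
    have hBe : B = ∅ := Finset.card_eq_zero.mp hB
    rw [hBe, hempty, hA0, hempty, mul_zero]
  · set tr : ℝ := (t : ℝ) with htr
    have htr1 : (1:ℝ) ≤ tr := Nat.one_le_cast.mpr ht
    have htrpos : (0:ℝ) < tr := by linarith
    set c := g B with hc
    -- one greedy step
    have hstep : ∀ k : ℕ, c - g (A (k+1)) ≤ (1 - 1/tr) * (c - g (A k)) := by
      intro k
      obtain ⟨xk, hx1, hx2⟩ := hAgreedy k
      have h1 : g B ≤ g (A k ∪ B) := hmono B (A k ∪ B) Finset.subset_union_right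
      have h2 := key B (A k)
      have h3 : ∑ x ∈ B, (g (insert x (A k)) - g (A k))
          ≤ B.card • (g (insert xk (A k)) - g (A k)) :=
        Finset.sum_le_card_nsmul B _ _ (fun y _ => hx2 y)
      rw [hB, nsmul_eq_mul] at h3
      have hgain : c - g (A k) ≤ tr * (g (A (k+1)) - g (A k)) := by
        rw [hx1]; push_cast at h3 ⊢; linarith
      have h4 : (c - g (A k)) / tr ≤ g (A (k+1)) - g (A k) := by
        rw [div_le_iff₀ htrpos]; linarith [mul_comm tr (g (A (k+1)) - g (A k))]
      have : c - g (A (k+1)) ≤ (c - g (A k)) - (c - g (A k)) / tr := by linarith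
      calc c - g (A (k+1)) ≤ (c - g (A k)) - (c - g (A k)) / tr := this
        _ = (1 - 1/tr) * (c - g (A k)) := by field_simp
    have hfac : (0:ℝ) ≤ 1 - 1/tr := by
      have : 1/tr ≤ 1 := by rw [div_le_one htrpos]; linarith
      linarith
    have hiter : ∀ k : ℕ, c - g (A k) ≤ (1 - 1/tr)^k * c := by
      intro k
      induction k with
      | zero => simp [hA0, hempty]
      | succ k ih =>
          calc c - g (A (k+1)) ≤ (1 - 1/tr) * (c - g (A k)) := hstep k
            _ ≤ (1 - 1/tr) * ((1 - 1/tr)^k * c) := mul_le_mul_of_nonneg_left ih hfac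
            _ = (1 - 1/tr)^(k+1) * c := by ring
    have hexp : (1 - 1/tr)^t ≤ Real.exp (-1) := by
      have h1 : 1 - 1/tr ≤ Real.exp (-(1/tr)) := by
        have := Real.add_one_le_exp (-(1/tr)); linarith
      calc (1 - 1/tr)^t ≤ (Real.exp (-(1/tr)))^t :=
            pow_le_pow_left₀ hfac h1 t
        _ = Real.exp (t * (-(1/tr))) := by rw [← Real.exp_nat_mul]
        _ = Real.exp (-1) := by
            congr 1
            rw [htr]
            field_simp
    have hfinal : c - g (A t) ≤ Real.exp (-1) * c :=
      calc c - g (A t) ≤ (1 - 1/tr)^t * c := hiter t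
        _ ≤ Real.exp (-1) * c := mul_le_mul_of_nonneg_right hexp hB0
    have hexpinv : Real.exp (-1) = 1 / Real.exp 1 := by
      rw [Real.exp_neg]; ring
    rw [hexpinv] at hfinal
    have hring : (1 - 1/Real.exp 1) * c = c - 1/Real.exp 1 * c := by ring
    have : (1 - 1/Real.exp 1) * c ≤ g (A t) := by rw [hring]; linarith
    calc c ≤ (1 - 1/Real.exp 1)⁻¹ * ((1 - 1/Real.exp 1) * c) := by
          rw [← mul_assoc, inv_mul_cancel₀ (ne_of_gt hepos), one_mul]
      _ ≤ (1 - 1/Real.exp 1)⁻¹ * g (A t) :=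
          mul_le_mul_of_nonneg_left this (inv_pos.mpr hepos).le
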